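/- Let A be an N×N matrix of rank r with nullity g = N - r. Choose g rows R whose removal does not decrease the rank of A, and g columns C whose removal does not decrease the rank of A, and let Q be an N×N matrix of rank g whose nonzero entries are all equal to 1 and form a bijection (pseudo-permutation) between the rows in R and the columns in C. Then A + Q is invertible, and |det(A + Q)| = |det(A₀)| where A₀ is the (N-g)×(N-g) submatrix of A obtained by deleting rows R and columns C. -/

import Mathlib

open Matrix Finset

lemma exists_col_comb {m n n' : Type*} [Fintype m] [Fintype n] [Fintype n']
    (B : Matrix m n ℂ) (f : n' → n)
    (h : (B.submatrix id f).rank = B.rank) (j : n) :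
    ∃ y : n' → ℂ, ∀ i, ∑ k, B i (f k) * y k = B i j := by
  classical
  have hle : LinearMap.range (B.submatrix id f).mulVecLin ≤ LinearMap.range B.mulVecLin := by
    rw [Matrix.range_mulVecLin, Matrix.range_mulVecLin]
    refine Submodule.span_le.2 ?_
    rintro v ⟨k, rfl⟩
    have : (B.submatrix id f).col k = B.col (f k) := by
      ext i; simp [Matrix.transpose_apply]
    rw [this]
    exact Submodule.subset_span (Set.mem_range_self _)
  have heq : LinearMap.range (B.submatrix id f).mulVecLin = LinearMap.range B.mulVecLin := by
    apply Submodule.eq_of_le_of_finrank_le hle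
    have h1 : Module.finrank ℂ (LinearMap.range (B.submatrix id f).mulVecLin)
        = (B.submatrix id f).rank := rfl
    have h2 : Module.finrank ℂ (LinearMap.range B.mulVecLin) = B.rank := rfl
    rw [h1, h2, h]
  have hmem : Bᵀ j ∈ LinearMap.range (B.submatrix id f).mulVecLin := by
    rw [heq, Matrix.range_mulVecLin]
    exact Submodule.subset_span (Set.mem_range_self _)
  obtain ⟨y, hy⟩ := hmem
  refine ⟨y, fun i => ?_⟩
  have := congrFun hy i
  simpa [Matrix.mulVecLin_apply, Matrix.mulVec, dotProduct] using this

/-- Adding a pseudo-permutation `Q` (supported on a row dependency list `R` and a column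
dependency list `C`) to a rank-`r` matrix `A` of nullity `g = N - r` yields an invertible
matrix with `|det (A + Q)| = |det A₀|`, where `A₀` is the submatrix of `A` obtained by
deleting the rows `R` and the columns `C`. -/
theorem pseudo_permutation_nonsingularization (N r g : ℕ) (hrg : r + g = N)
    (A Q : Matrix (Fin N) (Fin N) ℂ) (hrank : A.rank = r)
    (R C : Finset (Fin N)) (hRcard : R.card = g) (hCcard : C.card = g)
    (hRrank : (A.submatrix (fun i : {i : Fin N // i ∉ R} => (i : Fin N)) id).rank = r)
    (hCrank : (A.submatrix id (fun j : {j : Fin N // j ∉ C} => (j : Fin N))).rank = r)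
    (e : {i : Fin N // i ∈ R} ≃ {j : Fin N // j ∈ C})
    (hQ : ∀ i j : Fin N, Q i j =
      if h : i ∈ R then (if j = (e ⟨i, h⟩ : Fin N) then 1 else 0) else 0)
    (eqc : {i : Fin N // i ∉ R} ≃ {j : Fin N // j ∉ C}) :
    IsUnit (A + Q) ∧
      ‖(A + Q).det‖ =
        ‖(A.submatrix (fun i : {i : Fin N // i ∉ R} => (i : Fin N))
          (fun i : {i : Fin N // i ∉ R} => (eqc i : Fin N))).det‖ := by
  classical
  let eR : ({i : Fin N // i ∉ R} ⊕ {i : Fin N // i ∈ R}) ≃ Fin N :=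
    (Equiv.sumComm _ _).trans (Equiv.sumCompl (· ∈ R))
  let eC : ({i : Fin N // i ∉ R} ⊕ {i : Fin N // i ∈ R}) ≃ Fin N :=
    (Equiv.sumCongr eqc e).trans ((Equiv.sumComm _ _).trans (Equiv.sumCompl (· ∈ C)))
  let B₀ := A.submatrix (fun i : {i : Fin N // i ∉ R} => (i : Fin N))
      (fun i : {i : Fin N // i ∉ R} => (eqc i : Fin N))
  let B₁ : Matrix {i : Fin N // i ∉ R} {i : Fin N // i ∈ R} ℂ :=
    Matrix.of fun i c => A (i : Fin N) (e c : Fin N)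
  let B₂ : Matrix {i : Fin N // i ∈ R} {i : Fin N // i ∉ R} ℂ :=
    Matrix.of fun t j => A (t : Fin N) (eqc j : Fin N)
  let B₃ : Matrix {i : Fin N // i ∈ R} {i : Fin N // i ∈ R} ℂ :=
    Matrix.of fun t c => A (t : Fin N) (e c : Fin N)
  let M := (A + Q).submatrix eR eC
  have heRl : ∀ i : {i : Fin N // i ∉ R}, eR (Sum.inl i) = (i : Fin N) := fun i => rfl
  have heRr : ∀ t : {i : Fin N // i ∈ R}, eR (Sum.inr t) = (t : Fin N) := fun t => rfl
  have heCl : ∀ i : {i : Fin N // i ∉ R}, eC (Sum.inl i) = (eqc i : Fin N) := fun i => rfl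
  have heCr : ∀ t : {i : Fin N // i ∈ R}, eC (Sum.inr t) = (e t : Fin N) := fun t => rfl
  -- Block decomposition of `M`.
  have hMblock : M = fromBlocks B₀ B₁ B₂ (B₃ + 1) := by
    ext i j
    cases i with
    | inl i =>
      have hQ0 : ∀ j', Q (i : Fin N) j' = 0 := fun j' => by rw [hQ]; exact dif_neg i.2
      cases j with
      | inl j => simp [M, Matrix.submatrix_apply, heRl, heCl, hQ0, fromBlocks, B₀]
      | inr c => simp [M, Matrix.submatrix_apply, heRl, heCr, hQ0, fromBlocks, B₁]
    | inr t =>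
      have ht : (t : Fin N) ∈ R := t.2
      cases j with
      | inl j =>
        have hz : Q (t : Fin N) (eqc j : Fin N) = 0 := by
          rw [hQ, dif_pos ht, if_neg]
          intro hcontra
          exact (eqc j).2 (hcontra ▸ (e ⟨(t : Fin N), ht⟩).2)
        simp [M, Matrix.submatrix_apply, heRr, heCl, hz, fromBlocks, B₂]
      | inr c =>
        have hsub : (⟨(t : Fin N), ht⟩ : {i // i ∈ R}) = t := rfl
        have hv : Q (t : Fin N) (e c : Fin N) = if t = c then 1 else 0 := by
          rw [hQ, dif_pos ht, hsub]
          by_cases h : t = c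
          · subst h; simp
          · rw [if_neg, if_neg h]
            intro hcontra
            exact h (e.injective (Subtype.coe_injective hcontra)).symm
        simp only [M, Matrix.submatrix_apply, heRr, heCr, fromBlocks, Sum.elim_inr,
          Matrix.add_apply, hv, Matrix.one_apply, B₃, Matrix.of_apply]
  -- Each row of `A` is a linear combination of the rows outside `R`.
  have hATrank : ((Aᵀ).submatrix id (fun k : {i : Fin N // i ∉ R} => (k : Fin N))).rank
      = (Aᵀ).rank := by
    have h1 : (Aᵀ).submatrix id (fun k : {i : Fin N // i ∉ R} => (k : Fin N))
        = (A.submatrix (fun i : {i : Fin N // i ∉ R} => (i : Fin N)) id)ᵀ := rfl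
    rw [h1, Matrix.rank_transpose, Matrix.rank_transpose, hRrank, hrank]
  choose X hX using fun t : {i : Fin N // i ∈ R} =>
    exists_col_comb Aᵀ (fun k : {i : Fin N // i ∉ R} => (k : Fin N)) hATrank (t : Fin N)
  have hXB₀ : (Matrix.of X) * B₀ = B₂ := by
    ext t j
    simp only [Matrix.mul_apply, Matrix.of_apply, B₀, B₂, Matrix.submatrix_apply]
    rw [Finset.sum_congr rfl (fun k _ => mul_comm _ _)]
    exact hX t ((eqc j : {j : Fin N // j ∉ C}) : Fin N)
  have hXB₁ : (Matrix.of X) * B₁ = B₃ := by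
    ext t c
    simp only [Matrix.mul_apply, Matrix.of_apply, B₁, B₃]
    rw [Finset.sum_congr rfl (fun k _ => mul_comm _ _)]
    exact hX t ((e c : {j : Fin N // j ∈ C}) : Fin N)
  -- Row-reduce `M` to a block-triangular matrix.
  let L := fromBlocks (1 : Matrix {i : Fin N // i ∉ R} {i : Fin N // i ∉ R} ℂ)
      (0 : Matrix {i : Fin N // i ∉ R} {i : Fin N // i ∈ R} ℂ)
      (-(Matrix.of X)) (1 : Matrix {i : Fin N // i ∈ R} {i : Fin N // i ∈ R} ℂ)
  have hLM : L * M = fromBlocks B₀ B₁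
      (0 : Matrix {i : Fin N // i ∈ R} {i : Fin N // i ∉ R} ℂ)
      (1 : Matrix {i : Fin N // i ∈ R} {i : Fin N // i ∈ R} ℂ) := by
    show fromBlocks _ _ _ _ * M = _
    rw [hMblock, Matrix.fromBlocks_multiply]
    simp only [Matrix.one_mul, Matrix.zero_mul, add_zero, Matrix.neg_mul, hXB₀, hXB₁,
      neg_add_cancel, neg_add_cancel_left]
  have hdetL : L.det = 1 := by
    show (fromBlocks _ _ _ _).det = 1
    rw [Matrix.det_fromBlocks_zero₁₂]; simp
  have hdetM : M.det = B₀.det := by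
    have h1 : (L * M).det = L.det * M.det := Matrix.det_mul _ _
    rw [hLM, Matrix.det_fromBlocks_zero₂₁, hdetL, one_mul] at h1
    simp only [Matrix.det_one, mul_one] at h1
    exact h1.symm
  -- Relate `det M` and `det (A + Q)` up to a sign.
  let π : Equiv.Perm ({i : Fin N // i ∉ R} ⊕ {i : Fin N // i ∈ R}) := eC.trans eR.symm
  have hMperm : M = ((A + Q).submatrix eR eR).submatrix id ⇑π := by
    ext i j
    simp [M, π, Matrix.submatrix_apply]
  have hdet1 : M.det = Equiv.Perm.sign π * (A + Q).det := by
    rw [hMperm, Matrix.det_permute', Matrix.det_submatrix_equiv_self]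
  -- Each column of `A` is a linear combination of the columns outside `C`.
  have hC' : (A.submatrix id (fun t : {j : Fin N // j ∉ C} => (t : Fin N))).rank = A.rank := by
    rw [hCrank, hrank]
  choose Y hY using fun c : {j : Fin N // j ∈ C} =>
    exists_col_comb A (fun t : {j : Fin N // j ∉ C} => (t : Fin N)) hC' (c : Fin N)
  -- `B₀` has full rank.
  let Z : Matrix {i : Fin N // i ∉ R} (Fin N) ℂ :=
    Matrix.of fun k j => if h : j ∈ C then Y ⟨j, h⟩ (eqc k)
      else if ((eqc k : Fin N) = j) then 1 else 0
  have hAS : A.submatrix (fun i : {i : Fin N // i ∉ R} => (i : Fin N)) id = B₀ * Z := by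
    ext i j
    simp only [Matrix.mul_apply, Matrix.submatrix_apply, Matrix.of_apply, B₀, Z, id_eq]
    by_cases h : j ∈ C
    · simp only [dif_pos h]
      rw [Fintype.sum_equiv eqc _ (fun t => A (i : Fin N) (t : Fin N) * Y ⟨j, h⟩ t)
        (fun k => rfl)]
      exact (hY ⟨j, h⟩ (i : Fin N)).symm
    · simp only [dif_neg h]
      have hiff : ∀ k, (((eqc k : {j : Fin N // j ∉ C}) : Fin N) = j)
          ↔ k = eqc.symm ⟨j, h⟩ := by
        intro k
        have h2 : (((eqc k : {j : Fin N // j ∉ C}) : Fin N) = j) ↔ eqc k = ⟨j, h⟩ := by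
          constructor
          · intro hk; exact Subtype.ext hk
          · intro hk; rw [hk]
        rw [h2]
        exact Equiv.apply_eq_iff_eq_symm_apply eqc
      simp_rw [hiff, mul_ite, mul_one, mul_zero]
      rw [Finset.sum_ite_eq' Finset.univ (eqc.symm ⟨j, h⟩)
        (fun k => A (i : Fin N) ((eqc k : {j : Fin N // j ∉ C}) : Fin N))]
      simp
  have hr1 : r ≤ B₀.rank := by
    rw [← hRrank, hAS]
    exact Matrix.rank_mul_le_left _ _
  have hcardTR : Fintype.card {i : Fin N // i ∈ R} = g := by
    rw [← hRcard]
    exact Fintype.card_coe R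
  have hcardSR : Fintype.card {i : Fin N // i ∉ R} = r := by
    have h1 := Fintype.card_subtype_compl (fun i : Fin N => i ∈ R)
    rw [hcardTR, Fintype.card_fin] at h1
    omega
  have hr2 : B₀.rank = Fintype.card {i : Fin N // i ∉ R} :=
    le_antisymm (Matrix.rank_le_card_width B₀) (by rw [hcardSR]; exact hr1)
  have hsurj : Function.Surjective B₀.mulVec := by
    have htop : LinearMap.range B₀.mulVecLin = ⊤ := by
      apply Submodule.eq_top_of_finrank_eq
      have hfr : Module.finrank ℂ (LinearMap.range B₀.mulVecLin) = B₀.rank := rfl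
      rw [hfr, hr2, Module.finrank_fintype_fun_eq_card]
    intro v
    obtain ⟨x, hx⟩ := LinearMap.range_eq_top.1 htop v
    exact ⟨x, hx⟩
  have hunit₀ : IsUnit B₀ := Matrix.mulVec_surjective_iff_isUnit.1 hsurj
  have hdet₀ : B₀.det ≠ 0 := by
    have := (Matrix.isUnit_iff_isUnit_det _).1 hunit₀
    simpa [isUnit_iff_ne_zero] using this
  -- Conclusion.
  rcases Int.units_eq_one_or (Equiv.Perm.sign π) with hs | hs <;>
    rw [hs] at hdet1 <;>
    simp only [Units.val_one, Int.cast_one, one_mul, Units.val_neg, Int.cast_neg,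
      neg_mul, Int.cast_one, neg_one_mul] at hdet1
  · have hAQ : (A + Q).det = B₀.det := by rw [← hdet1, hdetM]
    refine ⟨(Matrix.isUnit_iff_isUnit_det _).2 (isUnit_iff_ne_zero.2 ?_), ?_⟩
    · rw [hAQ]; exact hdet₀
    · rw [hAQ]
  · have hAQ : (A + Q).det = -B₀.det := by
      have := hdet1.symm
      rw [hdetM] at this
      linear_combination -this
    refine ⟨(Matrix.isUnit_iff_isUnit_det _).2 (isUnit_iff_ne_zero.2 ?_), ?_⟩
    · rw [hAQ]; simpa using hdet₀
    · rw [hAQ]; simp [B₀]
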